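/- Fix k ≥ 1, the shift σ of ℤ, n ≥ 1, and two k-tuples x = (x₁,…,x_k), y = (y₁,…,y_k) of distinct integers. The set D_{x,y} of tuples (τ₁,…,τₙ) ∈ Sym(ℤ)ⁿ for which there exists φ in the subgroup generated by σ,τ₁,…,τₙ with x_j^φ = y_j for all j, is open and dense in Sym(ℤ)ⁿ. -/

import Mathlib

noncomputable section

/-- The topology of pointwise convergence on the symmetric group of `ℤ`:
induced from the product topology on `ℤ → ℤ` (with `ℤ` discrete). -/
instance permTop : TopologicalSpace (Equiv.Perm ℤ) :=
  TopologicalSpace.induced (fun π : Equiv.Perm ℤ => (π : ℤ → ℤ)) Pi.topologicalSpace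

/-- The shift permutation `a ↦ a + 1` of `ℤ`. -/
def shift : Equiv.Perm ℤ := Equiv.addRight 1

/-- The orbit of `a : ℤ` under the cyclic group generated by `γ`. -/
def permOrbit (γ : Equiv.Perm ℤ) (a : ℤ) : Set ℤ := {b | ∃ k : ℤ, (γ ^ k) a = b}

/-- Evaluation of a word on `n + 1` letters at `(σ, τ₁, …, τₙ)`, where the letter `0`
is sent to the shift `σ`. -/
def evalWord {n : ℕ} (τ : Fin n → Equiv.Perm ℤ) : FreeGroup (Fin (n + 1)) →* Equiv.Perm ℤ :=
  FreeGroup.lift (Fin.cons shift τ)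

/-! With the pointwise topology, `Sym(ℤ)` is a topological group, so every word in
`σ, τ₁, …, τₙ` depends continuously on `τ`; the set in question is the union over all words of
the preimages of the open set `{π | ∀ j, π xⱼ = yⱼ}`, hence open.

For density, a neighbourhood of `τ` only prescribes the values of the `τᵢ` on a finite set `F`.
Choose `M, M'` with `x + M` disjoint from `F` and `y + M'` disjoint from `τ₁(F)`, and change
`τ₁` off `F` so that it sends `xⱼ + M` to `yⱼ + M'`; then `φ = σ^(-M') τ₁ σ^M` works. -/

open Filter Topology

namespace Equiv.Perm

lemma isInducing_coeFn_int : IsInducing (fun π : Perm ℤ => (π : ℤ → ℤ)) := ⟨rfl⟩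

lemma continuous_apply_int (a : ℤ) : Continuous fun π : Perm ℤ => π a :=
  (continuous_apply a).comp isInducing_coeFn_int.continuous

lemma continuous_eval_int : Continuous fun q : Perm ℤ × ℤ => q.1 q.2 :=
  continuous_prod_of_discrete_right.2 continuous_apply_int

instance : IsTopologicalGroup (Perm ℤ) where
  continuous_mul := isInducing_coeFn_int.continuous_iff.2 <| continuous_pi fun a =>
    show Continuous fun p : Perm ℤ × Perm ℤ => p.1 (p.2 a) from
      continuous_eval_int.comp
        (continuous_fst.prodMk ((continuous_apply_int a).comp continuous_snd))
  continuous_inv := isInducing_coeFn_int.continuous_iff.2 <| continuous_pi fun a =>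
    continuous_discrete_rng.2 fun c => by
      convert (continuous_apply_int c).isOpen_preimage {a} (isOpen_discrete _) using 1
      ext π
      simp [Equiv.eq_symm_apply, eq_comm]

lemma isOpen_setOf_forall_apply_eq {ι : Type*} [Finite ι] (x y : ι → ℤ) :
    IsOpen {π : Perm ℤ | ∀ j, π (x j) = y j} := by
  simp only [Set.ofPred_forall]
  exact isOpen_iInter_of_finite fun j =>
    (continuous_apply_int (x j)).isOpen_preimage {y j} (isOpen_discrete _)

lemma tendsto_nhds_iff_eventually_apply_eq {β ι : Type*} {l : Filter β} {f : β → ι → Perm ℤ}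
    {τ : ι → Perm ℤ} : Tendsto f l (𝓝 τ) ↔ ∀ i a, ∀ᶠ b in l, f b i a = τ i a := by
  simp only [tendsto_pi_nhds, isInducing_coeFn_int.tendsto_nhds_iff, nhds_discrete, tendsto_pure,
    Function.comp_def]

lemma dense_of_forall_finset_exists_eqOn {ι : Type*} {S : Set (ι → Perm ℤ)}
    (h : ∀ (τ : ι → Perm ℤ) (F : Finset ℤ), ∃ τ' ∈ S, ∀ i, ∀ a ∈ F, τ' i a = τ i a) : Dense S := by
  intro τ
  choose τ' hτ'S hτ' using h τ
  refine mem_closure_of_tendsto (b := atTop) ?_ (Eventually.of_forall hτ'S)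
  refine tendsto_nhds_iff_eventually_apply_eq.2 fun i a => ?_
  filter_upwards [eventually_ge_atTop {a}] with F hF
  exact hτ' F i a (hF (Finset.mem_singleton_self a))

end Equiv.Perm

theorem Continuous.freeGroupLift {X G ι : Type*} [TopologicalSpace X] [Group G]
    [TopologicalSpace G] [ContinuousMul G] [ContinuousInv G] {f : X → ι → G} (hf : Continuous f)
    (w : FreeGroup ι) : Continuous fun x => FreeGroup.lift (f x) w := by
  induction w using FreeGroup.induction_on with
  | C1 => simp only [map_one]; exact continuous_const
  | of i => simp only [FreeGroup.lift_apply_of]; exact (continuous_apply i).comp hf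
  | inv_of i =>
    simp only [map_inv, FreeGroup.lift_apply_of]
    exact ((continuous_apply i).comp hf).inv
  | mul u v hu hv => simp only [map_mul]; exact hu.mul hv

theorem isOpen_setOf_exists_mem_closure_range {X G ι : Type*} [TopologicalSpace X] [Group G]
    [TopologicalSpace G] [ContinuousMul G] [ContinuousInv G] {f : X → ι → G} (hf : Continuous f)
    {V : Set G} (hV : IsOpen V) :
    IsOpen {x | ∃ g ∈ Subgroup.closure (Set.range (f x)), g ∈ V} := by
  have : {x | ∃ g ∈ Subgroup.closure (Set.range (f x)), g ∈ V} =
      ⋃ w : FreeGroup ι, (fun x => FreeGroup.lift (f x) w) ⁻¹' V := by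
    ext x
    simp [← FreeGroup.range_lift_eq_closure]
  rw [this]
  exact isOpen_iUnion fun w => hV.preimage (hf.freeGroupLift w)

lemma exists_forall_add_notMem {G ι : Type*} [AddGroup G] [Infinite G] [Finite ι] {s : Set G}
    (hs : s.Finite) (x : ι → G) : ∃ M, ∀ j, x j + M ∉ s := by
  obtain ⟨M, hM⟩ := (Set.finite_iUnion fun j => hs.image (-x j + ·)).exists_notMem
  refine ⟨M, fun j hj => hM (Set.mem_iUnion.2 ⟨j, x j + M, hj, ?_⟩)⟩
  simp

lemma Equiv.Perm.exists_eqOn_and_apply_add_eq {G ι : Type*} [AddGroup G] [Infinite G] [Finite ι]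
    (π : Perm G) (F : Finset G) {x y : ι → G} (hx : Function.Injective x)
    (hy : Function.Injective y) :
    ∃ g : Perm G, ∃ M M' : G, (∀ a ∈ F, g a = π a) ∧ ∀ j, g (x j + M) = y j + M' := by
  obtain ⟨M, hM⟩ := exists_forall_add_notMem F.finite_toSet x
  obtain ⟨M', hM'⟩ := exists_forall_add_notMem (F.finite_toSet.image π) y
  obtain ⟨g, hg⟩ := exists_extending_pair
    (Sum.elim (fun a : F => (a : G)) (fun j => x j + M))
    (Sum.elim (fun a : F => π a) (fun j => y j + M'))
    (Subtype.val_injective.sumElim ((add_left_injective M).comp hx)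
      fun a j h => hM j (h ▸ a.2))
    ((π.injective.comp Subtype.val_injective).sumElim ((add_left_injective M').comp hy)
      fun a j h => hM' j (h ▸ ⟨a, a.2, rfl⟩))
  exact ⟨g, M, M', fun a ha => hg (.inl ⟨a, ha⟩), fun j => hg (.inr j)⟩

lemma exists_mem_apply_eq_of_shift_mem {ι : Type*} {H : Subgroup (Equiv.Perm ℤ)}
    (hσ : shift ∈ H) {g : Equiv.Perm ℤ} (hg : g ∈ H) {x y : ι → ℤ} {M M' : ℤ}
    (h : ∀ j, g (x j + M) = y j + M') : ∃ φ ∈ H, ∀ j, φ (x j) = y j :=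
  ⟨shift ^ (-M') * g * shift ^ M, mul_mem (mul_mem (zpow_mem hσ _) hg) (zpow_mem hσ _),
    fun j => by simp [shift, h]⟩

theorem stmt_10_general (k n : ℕ) (hn : 1 ≤ n)
    (x y : Fin k → ℤ) (hx : Function.Injective x) (hy : Function.Injective y) :
    IsOpen {τ : Fin n → Equiv.Perm ℤ |
        ∃ φ ∈ Subgroup.closure (Set.range (Fin.cons shift τ)), ∀ j, φ (x j) = y j} ∧
      Dense {τ : Fin n → Equiv.Perm ℤ |
        ∃ φ ∈ Subgroup.closure (Set.range (Fin.cons shift τ)), ∀ j, φ (x j) = y j} := by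
  refine ⟨isOpen_setOf_exists_mem_closure_range (continuous_const.finCons continuous_id)
    (Equiv.Perm.isOpen_setOf_forall_apply_eq x y), ?_⟩
  refine Equiv.Perm.dense_of_forall_finset_exists_eqOn fun τ F => ?_
  let i₀ : Fin n := ⟨0, hn⟩
  obtain ⟨g, M, M', hgF, hg⟩ := (τ i₀).exists_eqOn_and_apply_add_eq F hx hy
  refine ⟨Function.update τ i₀ g, ?_, fun i a ha => ?_⟩
  · refine exists_mem_apply_eq_of_shift_mem (Subgroup.subset_closure ?_)
      (Subgroup.subset_closure ?_) hg
    · exact ⟨0, rfl⟩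
    · exact ⟨i₀.succ, by simp⟩
  · rcases eq_or_ne i i₀ with rfl | hi
    · simpa using hgF a ha
    · simp [Function.update_of_ne hi]

/-- for fixed `k`-tuples of distinct integers `x, y`, the set of tuples
`(τ₁, …, τₙ)` such that some element of `⟨σ, τ₁, …, τₙ⟩` sends each `xⱼ` to `yⱼ` is open
and dense. -/
theorem stmt_10 (k n : ℕ) (hk : 1 ≤ k) (hn : 1 ≤ n)
    (x y : Fin k → ℤ) (hx : Function.Injective x) (hy : Function.Injective y) :
    IsOpen {τ : Fin n → Equiv.Perm ℤ |
        ∃ φ ∈ Subgroup.closure (Set.range (Fin.cons shift τ)), ∀ j, φ (x j) = y j} ∧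
      Dense {τ : Fin n → Equiv.Perm ℤ |
        ∃ φ ∈ Subgroup.closure (Set.range (Fin.cons shift τ)), ∀ j, φ (x j) = y j} :=
  stmt_10_general k n hn x y hx hy
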